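/- Let α = ({D_g}_{g∈G}, {α_g}_{g∈G}) be a partial action of a groupoid G on a ring R such that every D_g, g ∈ G, is a unital ring. Then a globalization of α is unique up to equivalence: if β = ({E_g}, {β_g}) acting on T (with monomorphisms φ_e) and β' = ({E'_g}, {β'_g}) acting on T' (with monomorphisms φ'_e) are both globalizations of α, then for each e ∈ G₀ there exists a ring isomorphism ψ_e : E'_e → E_e such that β_g(ψ_{d(g)}(a)) = ψ_{r(g)}(β'_g(a)) for all g ∈ G and all a ∈ E'_{d(g)}. -/

import Mathlib

/-!
Write `1_g` for the identity `u g` of `D_g`. An element `x ∈ E_e` is recorded by its coordinates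
`κ_k(x) = φ⁻¹(β_k(x) · φ(1_{r k})) ∈ D_{r k}`, for the `k` with `d k = e`. Since `φ(1_{r k})` is a
central idempotent of `E_{r k}`, coordinates are additive and multiplicative, and
`κ_k(β_g x) = κ_{kg}(x)`. On a generator `β_h(φ a)` of `E_e` they are `α_{kh}(a · 1_{(kh)⁻¹})`,
a formula in `α` alone, so both globalizations realise the same coordinate families. Coordinates
also determine `x`: if they all vanish then `x` annihilates every generator, hence all of `E_e`,
and `x = 0` because `E_e` is s-unital. Hence `ψ_e` may send `x'` to the element of `E_e` with the
same coordinates.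
-/

universe u

/-- A groupoid in the algebraic sense of Lawson: a non-empty set `G` with a
partially defined binary operation (here modeled by a total operation `mul`
whose value is only constrained when it is defined, i.e. when `d g = r h`),
an inversion `inv`, and domain/range maps `d`, `r`. -/
structure AlgGroupoid (G : Type u) where
  mul : G → G → G
  inv : G → G
  d : G → G
  r : G → G
  mul_assoc' : ∀ g h l, d g = r h → d h = r l → mul (mul g h) l = mul g (mul h l)
  mul_d : ∀ g, mul g (d g) = g
  r_mul : ∀ g, mul (r g) g = g
  inv_mul : ∀ g, mul (inv g) g = d g
  mul_inv : ∀ g, mul g (inv g) = r g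
  d_mul : ∀ g h, d g = r h → d (mul g h) = d h
  r_mul' : ∀ g h, d g = r h → r (mul g h) = r g
  d_inv : ∀ g, d (inv g) = r g
  r_inv : ∀ g, r (inv g) = d g
  inv_inv : ∀ g, inv (inv g) = g
  d_d : ∀ g, d (d g) = d g
  r_d : ∀ g, r (d g) = d g
  d_r : ∀ g, d (r g) = r g
  r_r : ∀ g, r (r g) = r g

/-- `e` is an identity element of the groupoid `𝔾`, i.e. an element of `G₀`. -/
def AlgGroupoid.isId {G : Type u} (𝔾 : AlgGroupoid G) (e : G) : Prop := 𝔾.d e = e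

instance {G : Type u} [DecidableEq G] (𝔾 : AlgGroupoid G) (e : G) : Decidable (𝔾.isId e) :=
  inferInstanceAs (Decidable (𝔾.d e = e))

/-- `D` is a two-sided ideal of `E` (both being subsets of an ambient
non-unital ring `T`). -/
structure IsIdealIn {T : Type u} [NonUnitalRing T] (D E : Set T) : Prop where
  subset : D ⊆ E
  zero_mem : (0 : T) ∈ D
  add_mem : ∀ ⦃x y : T⦄, x ∈ D → y ∈ D → x + y ∈ D
  neg_mem : ∀ ⦃x : T⦄, x ∈ D → -x ∈ D
  mul_mem_left : ∀ ⦃x y : T⦄, x ∈ E → y ∈ D → x * y ∈ D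
  mul_mem_right : ∀ ⦃x y : T⦄, x ∈ D → y ∈ E → x * y ∈ D

/-- `u` is a (two-sided) multiplicative identity element of the subset `D`. -/
def IsIdentityElem {T : Type u} [NonUnitalRing T] (u : T) (D : Set T) : Prop :=
  u ∈ D ∧ ∀ x ∈ D, u * x = x ∧ x * u = x

/-- A partial action `α = ({D_g}, {α_g})` of a groupoid `𝔾` on the ring whose
carrier is the subset `R` of the ambient non-unital ring `T` (take
`R = Set.univ` for a partial action on `T` itself).  For each `g`, `D (r g)`
is an ideal of `R`, `D g` is an ideal of `D (r g)` and `act g` restricts to a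
ring isomorphism from `D (inv g)` onto `D g`; moreover `act e` is the identity
of `D e` for identities `e`, and for composable `g, h` the map `act (mul g h)`
extends `act g ∘ act h` (whose domain is `(act h)⁻¹ (D (inv g) ∩ D h)`). -/
structure PartialGroupoidAction {G : Type u} (𝔾 : AlgGroupoid G) (T : Type u)
    [NonUnitalRing T] (R : Set T) where
  D : G → Set T
  act : G → T → T
  ideal_r : ∀ g, IsIdealIn (D (𝔾.r g)) R
  ideal : ∀ g, IsIdealIn (D g) (D (𝔾.r g))
  bijOn : ∀ g, Set.BijOn (act g) (D (𝔾.inv g)) (D g)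
  map_add : ∀ g, ∀ x ∈ D (𝔾.inv g), ∀ y ∈ D (𝔾.inv g), act g (x + y) = act g x + act g y
  map_mul : ∀ g, ∀ x ∈ D (𝔾.inv g), ∀ y ∈ D (𝔾.inv g), act g (x * y) = act g x * act g y
  act_id : ∀ e, 𝔾.isId e → ∀ x ∈ D e, act e x = x
  dom_cond : ∀ g h, 𝔾.d g = 𝔾.r h → ∀ x ∈ D (𝔾.inv h), act h x ∈ D (𝔾.inv g) →
    x ∈ D (𝔾.inv (𝔾.mul g h))
  comp_cond : ∀ g h, 𝔾.d g = 𝔾.r h → ∀ x ∈ D (𝔾.inv h), act h x ∈ D (𝔾.inv g) →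
    act g (act h x) = act (𝔾.mul g h) x

/-- The partial action `α` is global if, for all composable `g, h`, the
composite `α_g ∘ α_h` (taken on its largest possible domain) coincides with
`α_{gh}`; since both maps always agree on the domain of the composite, this
amounts to the equality of the two domains. -/
def PartialGroupoidAction.IsGlobal {G : Type u} {𝔾 : AlgGroupoid G} {T : Type u}
    [NonUnitalRing T] {R : Set T} (α : PartialGroupoidAction 𝔾 T R) : Prop :=
  ∀ g h, 𝔾.d g = 𝔾.r h →
    {x | x ∈ α.D (𝔾.inv h) ∧ α.act h x ∈ α.D (𝔾.inv g)} = α.D (𝔾.inv (𝔾.mul g h))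

/-- The global action `β` of `𝔾` on `T` is a globalization (enveloping action)
of the partial action `α` of `𝔾` on `R`, witnessed by the family of ring
monomorphisms `φ e : D_e → E_e` (`e` an identity of `𝔾`), where `E_g = β.D g`. -/
structure Globalization {G : Type u} (𝔾 : AlgGroupoid G) {R : Type u} [NonUnitalRing R]
    (α : PartialGroupoidAction 𝔾 R (Set.univ : Set R)) {T : Type u} [NonUnitalRing T]
    (β : PartialGroupoidAction 𝔾 T (Set.univ : Set T)) where
  global : β.IsGlobal
  φ : G → R → T
  φ_injOn : ∀ e, 𝔾.isId e → Set.InjOn (φ e) (α.D e)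
  φ_add : ∀ e, 𝔾.isId e → ∀ x ∈ α.D e, ∀ y ∈ α.D e, φ e (x + y) = φ e x + φ e y
  φ_mul : ∀ e, 𝔾.isId e → ∀ x ∈ α.D e, ∀ y ∈ α.D e, φ e (x * y) = φ e x * φ e y
  φ_mem : ∀ e, 𝔾.isId e → ∀ x ∈ α.D e, φ e x ∈ β.D e
  φ_ideal : ∀ e, 𝔾.isId e → IsIdealIn (φ e '' α.D e) (β.D e)
  compat_D : ∀ g, φ (𝔾.r g) '' α.D g
      = (φ (𝔾.r g) '' α.D (𝔾.r g)) ∩ (β.act g '' (φ (𝔾.d g) '' α.D (𝔾.d g)))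
  compat_act : ∀ g, ∀ a ∈ α.D (𝔾.inv g), β.act g (φ (𝔾.d g) a) = φ (𝔾.r g) (α.act g a)
  spans : ∀ g, β.D g
      = ↑(AddSubgroup.closure
          (⋃ h ∈ {h : G | 𝔾.r h = 𝔾.r g}, β.act h '' (φ (𝔾.d h) '' α.D (𝔾.d h))))

/-- Bundled form: some ring `T` together with a global action of `𝔾` on it
which is a globalization of `α`. -/
structure GlobalizationOf {G : Type u} (𝔾 : AlgGroupoid G) {R : Type u} [NonUnitalRing R]
    (α : PartialGroupoidAction 𝔾 R (Set.univ : Set R)) : Type (u + 1) where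
  T : Type u
  [ringT : NonUnitalRing T]
  β : PartialGroupoidAction 𝔾 T (Set.univ : Set T)
  glob : Globalization 𝔾 α β

namespace AlgGroupoid

variable {G : Type u} (𝔾 : AlgGroupoid G)

lemma isId_d (g : G) : 𝔾.isId (𝔾.d g) := 𝔾.d_d g

lemma isId_r (g : G) : 𝔾.isId (𝔾.r g) := 𝔾.d_r g

lemma r_eq_of_isId {e : G} (he : 𝔾.isId e) : 𝔾.r e = e := by
  rw [← he, 𝔾.r_d]

end AlgGroupoid

lemma map_zero_of_map_add_on {A B : Type*} [AddGroup A] [AddGroup B] {f : A → B} {S : Set A}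
    (h0 : (0 : A) ∈ S) (hf : ∀ x ∈ S, ∀ y ∈ S, f (x + y) = f x + f y) : f 0 = 0 := by
  simpa using hf 0 h0 0 h0

lemma IsIdealIn.sub_mem {T : Type u} [NonUnitalRing T] {D E : Set T} (hD : IsIdealIn D E)
    {x y : T} (hx : x ∈ D) (hy : y ∈ D) : x - y ∈ D :=
  sub_eq_add_neg x y ▸ hD.add_mem hx (hD.neg_mem hy)

lemma IsIdealIn.commute_of_isIdentityElem {T : Type u} [NonUnitalRing T] {I E : Set T}
    (hI : IsIdealIn I E) {v : T} (hv : IsIdentityElem v I) {z : T} (hz : z ∈ E) :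
    Commute v z := by
  have hzv : v * (z * v) = z * v := (hv.2 _ (hI.mul_mem_left hz hv.1)).1
  have hvz : v * z * v = v * z := (hv.2 _ (hI.mul_mem_right hv.1 hz)).2
  rw [Commute, SemiconjBy, ← hzv, ← mul_assoc, hvz]

lemma add_mul_add_sub_mul_eq_self {T : Type u} [NonUnitalRing T] {x y v w : T}
    (hxv : x * v = x) (hyw : y * w = y) (hvy : Commute v y) :
    (x + y) * (v + w - v * w) = x + y := by
  have hyvw : y * v * w = y * v := by rw [← hvy.eq, mul_assoc, hyw]
  simp only [mul_sub, mul_add, add_mul, ← mul_assoc, hxv, hyw, hyvw]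
  abel

namespace PartialGroupoidAction

variable {G : Type u} {𝔾 : AlgGroupoid G} {A : Type u} [NonUnitalRing A] {S : Set A}
  (P : PartialGroupoidAction 𝔾 A S)

lemma act_zero (g : G) : P.act g 0 = 0 :=
  map_zero_of_map_add_on (P.ideal _).zero_mem (P.map_add g)

lemma mul_act_eq_self {g : G} {v : A} (hv : IsIdentityElem v (P.D (𝔾.inv g))) {c : A}
    (hc : c ∈ P.D g) : c * P.act g v = c := by
  obtain ⟨c', hc', rfl⟩ := (P.bijOn g).surjOn hc
  rw [← P.map_mul g _ hc' _ hv.1, (hv.2 c' hc').2]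

end PartialGroupoidAction

namespace Globalization

variable {G : Type u} {𝔾 : AlgGroupoid G} {R : Type u} [NonUnitalRing R]
  {α : PartialGroupoidAction 𝔾 R (Set.univ : Set R)} {T : Type u} [NonUnitalRing T]
  {β : PartialGroupoidAction 𝔾 T (Set.univ : Set T)} (hβ : Globalization 𝔾 α β)

include hβ in
lemma D_eq_D_r (g : G) : β.D g = β.D (𝔾.r g) := by
  rw [hβ.spans g, hβ.spans (𝔾.r g), 𝔾.r_r]

include hβ in
lemma D_inv (g : G) : β.D (𝔾.inv g) = β.D (𝔾.d g) := by
  rw [hβ.D_eq_D_r, 𝔾.r_inv]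

include hβ in
lemma act_mem {g : G} {x : T} (hx : x ∈ β.D (𝔾.d g)) : β.act g x ∈ β.D (𝔾.r g) := by
  rw [← hβ.D_eq_D_r]
  exact (β.bijOn g).mapsTo (hβ.D_inv g ▸ hx)

include hβ in
lemma exists_act_eq {g : G} {y : T} (hy : y ∈ β.D (𝔾.r g)) :
    ∃ z ∈ β.D (𝔾.d g), β.act g z = y := by
  rw [← hβ.D_inv]
  exact (β.bijOn g).surjOn (hβ.D_eq_D_r g ▸ hy)

include hβ in
lemma act_act {g h : G} (hgh : 𝔾.d g = 𝔾.r h) {x : T} (hx : x ∈ β.D (𝔾.d h)) :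
    β.act g (β.act h x) = β.act (𝔾.mul g h) x := by
  refine β.comp_cond g h hgh x (hβ.D_inv h ▸ hx) ?_
  rw [hβ.D_inv, hgh]
  exact hβ.act_mem hx

include hβ in
lemma act_mul {g : G} {x y : T} (hx : x ∈ β.D (𝔾.d g)) (hy : y ∈ β.D (𝔾.d g)) :
    β.act g (x * y) = β.act g x * β.act g y :=
  β.map_mul g x (hβ.D_inv g ▸ hx) y (hβ.D_inv g ▸ hy)

lemma φ_zero {e : G} (he : 𝔾.isId e) : hβ.φ e 0 = 0 :=
  map_zero_of_map_add_on (α.ideal e).zero_mem (hβ.φ_add e he)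

lemma closure_induction {e : G} (he : 𝔾.isId e) {p : T → Prop}
    (gen : ∀ h, 𝔾.r h = e → ∀ a ∈ α.D (𝔾.d h), p (β.act h (hβ.φ (𝔾.d h) a)))
    (zero : p 0) (add : ∀ x ∈ β.D e, ∀ y ∈ β.D e, p x → p y → p (x + y))
    (neg : ∀ x ∈ β.D e, p x → p (-x)) {x : T} (hx : x ∈ β.D e) : p x := by
  have hspan := hβ.spans e
  rw [𝔾.r_eq_of_isId he] at hspan
  rw [hspan] at hx add neg
  induction hx using AddSubgroup.closure_induction with
  | mem x hx =>
    simp only [Set.mem_iUnion, Set.mem_ofPred_eq, exists_prop] at hx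
    obtain ⟨h, hh, _, ⟨a, ha, rfl⟩, rfl⟩ := hx
    exact gen h hh a ha
  | zero => exact zero
  | add x y hx hy px py => exact add x hx y hy px py
  | neg x hx px => exact neg x hx px

variable {u : G → R} (hu : ∀ g, IsIdentityElem (u g) (α.D g))

include hu in
lemma isIdentityElem_φ_unit {e : G} (he : 𝔾.isId e) :
    IsIdentityElem (hβ.φ e (u e)) (hβ.φ e '' α.D e) := by
  refine ⟨⟨u e, (hu e).1, rfl⟩, ?_⟩
  rintro _ ⟨a, ha, rfl⟩
  rw [← hβ.φ_mul e he _ (hu e).1 _ ha, ← hβ.φ_mul e he _ ha _ (hu e).1,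
    ((hu e).2 a ha).1, ((hu e).2 a ha).2]
  exact ⟨rfl, rfl⟩

include hu in
lemma commute_φ_unit {e : G} (he : 𝔾.isId e) {z : T} (hz : z ∈ β.D e) :
    Commute (hβ.φ e (u e)) z :=
  (hβ.φ_ideal e he).commute_of_isIdentityElem (hβ.isIdentityElem_φ_unit hu he) hz

include hu in
/-- By `compat_D` the left side lies in `φ(D_g)`, on which `φ(α_g(1_{g⁻¹}))` acts as a right
identity; this is what lets the product be computed inside `R`. -/
lemma act_φ_mul_φ_unit {g : G} {a : R} (ha : a ∈ α.D (𝔾.d g)) :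
    β.act g (hβ.φ (𝔾.d g) a) * hβ.φ (𝔾.r g) (u (𝔾.r g))
      = hβ.φ (𝔾.r g) (α.act g (a * u (𝔾.inv g))) := by
  have hφa : hβ.φ (𝔾.d g) a ∈ β.D (𝔾.d g) := hβ.φ_mem _ (𝔾.isId_d g) a ha
  have hu' : u (𝔾.inv g) ∈ α.D (𝔾.d g) := 𝔾.r_inv g ▸ (α.ideal _).subset (hu _).1
  have hau : a * u (𝔾.inv g) ∈ α.D (𝔾.inv g) :=
    (α.ideal _).mul_mem_left (𝔾.r_inv g ▸ ha) (hu _).1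
  have hαu : α.act g (u (𝔾.inv g)) ∈ α.D (𝔾.r g) :=
    (α.ideal g).subset ((α.bijOn g).mapsTo (hu _).1)
  obtain ⟨c, hc, hcw⟩ : β.act g (hβ.φ (𝔾.d g) a) * hβ.φ (𝔾.r g) (u (𝔾.r g))
      ∈ hβ.φ (𝔾.r g) '' α.D g := by
    rw [hβ.compat_D g]
    refine ⟨(hβ.φ_ideal _ (𝔾.isId_r g)).mul_mem_left (hβ.act_mem hφa) ⟨_, (hu _).1, rfl⟩, ?_⟩
    obtain ⟨z, hz, hzu⟩ := hβ.exists_act_eq (hβ.φ_mem _ (𝔾.isId_r g) _ (hu (𝔾.r g)).1)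
    refine ⟨_, (hβ.φ_ideal _ (𝔾.isId_d g)).mul_mem_right ⟨a, ha, rfl⟩ hz, ?_⟩
    rw [hβ.act_mul hφa hz, hzu]
  calc β.act g (hβ.φ (𝔾.d g) a) * hβ.φ (𝔾.r g) (u (𝔾.r g))
      = hβ.φ (𝔾.r g) (c * α.act g (u (𝔾.inv g))) := by
        rw [α.mul_act_eq_self (hu _) hc]; exact hcw.symm
    _ = β.act g (hβ.φ (𝔾.d g) a) * hβ.φ (𝔾.r g) (α.act g (u (𝔾.inv g))) := by
        rw [hβ.φ_mul _ (𝔾.isId_r g) _ ((α.ideal g).subset hc) _ hαu, hcw, mul_assoc,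
          ← hβ.φ_mul _ (𝔾.isId_r g) _ (hu _).1 _ hαu, ((hu _).2 _ hαu).1]
    _ = hβ.φ (𝔾.r g) (α.act g (a * u (𝔾.inv g))) := by
        rw [← hβ.compat_act g _ (hu _).1, ← hβ.act_mul hφa (hβ.φ_mem _ (𝔾.isId_d g) _ hu'),
          ← hβ.φ_mul _ (𝔾.isId_d g) _ ha _ hu', hβ.compat_act g _ hau]

variable (u) in
/-- Only meaningful for `x ∈ E_{d k}`; elsewhere `invFunOn` returns junk. -/
noncomputable def coord (k : G) (x : T) : R :=
  Function.invFunOn (hβ.φ (𝔾.r k)) (α.D (𝔾.r k))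
    (β.act k x * hβ.φ (𝔾.r k) (u (𝔾.r k)))

include hu in
lemma coord_spec {k : G} {x : T} (hx : x ∈ β.D (𝔾.d k)) :
    hβ.coord u k x ∈ α.D (𝔾.r k) ∧
      hβ.φ (𝔾.r k) (hβ.coord u k x) = β.act k x * hβ.φ (𝔾.r k) (u (𝔾.r k)) := by
  have hmem : β.act k x * hβ.φ (𝔾.r k) (u (𝔾.r k)) ∈ hβ.φ (𝔾.r k) '' α.D (𝔾.r k) :=
    (hβ.φ_ideal _ (𝔾.isId_r k)).mul_mem_left (hβ.act_mem hx) ⟨_, (hu _).1, rfl⟩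
  exact ⟨Function.invFunOn_mem hmem, Function.invFunOn_eq hmem⟩

include hu in
lemma coord_eq {k : G} {x : T} (hx : x ∈ β.D (𝔾.d k)) {a : R} (ha : a ∈ α.D (𝔾.r k))
    (h : hβ.φ (𝔾.r k) a = β.act k x * hβ.φ (𝔾.r k) (u (𝔾.r k))) : hβ.coord u k x = a :=
  hβ.φ_injOn _ (𝔾.isId_r k) (hβ.coord_spec hu hx).1 ha
    ((hβ.coord_spec hu hx).2.trans h.symm)

include hu in
lemma coord_add {k : G} {x y : T} (hx : x ∈ β.D (𝔾.d k)) (hy : y ∈ β.D (𝔾.d k)) :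
    hβ.coord u k (x + y) = hβ.coord u k x + hβ.coord u k y := by
  obtain ⟨hcx, hφx⟩ := hβ.coord_spec hu hx
  obtain ⟨hcy, hφy⟩ := hβ.coord_spec hu hy
  refine hβ.coord_eq hu ((β.ideal _).add_mem hx hy) ((α.ideal _).add_mem hcx hcy) ?_
  rw [hβ.φ_add _ (𝔾.isId_r k) _ hcx _ hcy, hφx, hφy,
    β.map_add k _ (hβ.D_inv k ▸ hx) _ (hβ.D_inv k ▸ hy), add_mul]

include hu in
lemma coord_zero (k : G) : hβ.coord u k 0 = 0 :=
  map_zero_of_map_add_on (β.ideal _).zero_mem fun _ hx _ hy => hβ.coord_add hu hx hy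

include hu in
lemma coord_neg {k : G} {x : T} (hx : x ∈ β.D (𝔾.d k)) :
    hβ.coord u k (-x) = -hβ.coord u k x := by
  refine eq_neg_of_add_eq_zero_right ?_
  rw [← hβ.coord_add hu hx ((β.ideal _).neg_mem hx), add_neg_cancel, hβ.coord_zero hu]

include hu in
lemma coord_sub {k : G} {x y : T} (hx : x ∈ β.D (𝔾.d k)) (hy : y ∈ β.D (𝔾.d k)) :
    hβ.coord u k (x - y) = hβ.coord u k x - hβ.coord u k y := by
  rw [sub_eq_add_neg, hβ.coord_add hu hx ((β.ideal _).neg_mem hy), hβ.coord_neg hu hy,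
    ← sub_eq_add_neg]

include hu in
lemma coord_mul {k : G} {x y : T} (hx : x ∈ β.D (𝔾.d k)) (hy : y ∈ β.D (𝔾.d k)) :
    hβ.coord u k (x * y) = hβ.coord u k x * hβ.coord u k y := by
  obtain ⟨hcx, hφx⟩ := hβ.coord_spec hu hx
  obtain ⟨hcy, hφy⟩ := hβ.coord_spec hu hy
  have hxy : x * y ∈ β.D (𝔾.d k) := (β.ideal _).mul_mem_left ((β.ideal _).subset hx) hy
  refine hβ.coord_eq hu hxy ((α.ideal _).mul_mem_left ((α.ideal _).subset hcx) hcy) ?_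
  set w := hβ.φ (𝔾.r k) (u (𝔾.r k))
  have hww : w * w = w := by
    rw [← hβ.φ_mul _ (𝔾.isId_r k) _ (hu _).1 _ (hu _).1, ((hu _).2 _ (hu _).1).1]
  rw [hβ.φ_mul _ (𝔾.isId_r k) _ hcx _ hcy, hφx, hφy, hβ.act_mul hx hy, mul_assoc,
    ← mul_assoc w, (hβ.commute_φ_unit hu (𝔾.isId_r k) (hβ.act_mem hy)).eq, mul_assoc, hww,
    mul_assoc]

lemma coord_act {g k : G} (hkg : 𝔾.d k = 𝔾.r g) {x : T} (hx : x ∈ β.D (𝔾.d g)) :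
    hβ.coord u k (β.act g x) = hβ.coord u (𝔾.mul k g) x := by
  rw [coord, coord, 𝔾.r_mul' k g hkg, hβ.act_act hkg hx]

include hu in
lemma coord_of_isId {e : G} (he : 𝔾.isId e) {x : T} (hx : x ∈ β.D e) :
    hβ.φ e (hβ.coord u e x) = x * hβ.φ e (u e) := by
  have h := (hβ.coord_spec hu (k := e) (he.symm ▸ hx)).2
  rwa [𝔾.r_eq_of_isId he, β.act_id e he x hx] at h

include hu in
lemma coord_act_φ {k h : G} (hkh : 𝔾.d k = 𝔾.r h) {a : R} (ha : a ∈ α.D (𝔾.d h)) :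
    hβ.coord u k (β.act h (hβ.φ (𝔾.d h) a))
      = α.act (𝔾.mul k h) (a * u (𝔾.inv (𝔾.mul k h))) := by
  have hd : 𝔾.d (𝔾.mul k h) = 𝔾.d h := 𝔾.d_mul k h hkh
  rw [hβ.coord_act hkh (hβ.φ_mem _ (𝔾.isId_d h) a ha)]
  refine hβ.coord_eq hu (hd ▸ hβ.φ_mem _ (𝔾.isId_d h) a ha) ?_ ?_
  · exact (α.ideal _).subset ((α.bijOn _).mapsTo
      ((α.ideal _).mul_mem_left ((𝔾.r_inv _).trans hd ▸ ha) (hu _).1))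
  · have hφ := hβ.act_φ_mul_φ_unit hu (g := 𝔾.mul k h) (hd ▸ ha)
    rw [hd] at hφ
    exact hφ.symm

include hβ hu in
/-- `E_e` is s-unital: the generator `β_h(φ a)` has the central unit `β_h(φ 1_{d h})`, and units
of finitely many generators combine by `v + w - v w`. -/
lemma exists_central_unit {e : G} (he : 𝔾.isId e) {x : T} (hx : x ∈ β.D e) :
    ∃ v ∈ β.D e, x * v = x ∧ ∀ z ∈ β.D e, Commute v z := by
  refine hβ.closure_induction he
    (p := fun x => ∃ v ∈ β.D e, x * v = x ∧ ∀ z ∈ β.D e, Commute v z)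
    (fun h hh a ha => ?_) ?_ (fun x hx y hy ihx ihy => ?_) (fun x hx ih => ?_) hx
  · have hφa := hβ.φ_mem _ (𝔾.isId_d h) a ha
    have hφu := hβ.φ_mem _ (𝔾.isId_d h) _ (hu (𝔾.d h)).1
    refine ⟨_, hh ▸ hβ.act_mem hφu, ?_, ?_⟩
    · rw [← hβ.act_mul hφa hφu, ← hβ.φ_mul _ (𝔾.isId_d h) _ ha _ (hu _).1,
        ((hu _).2 a ha).2]
    · intro z hz
      obtain ⟨z', hz', rfl⟩ := hβ.exists_act_eq (hh.symm ▸ hz)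
      rw [Commute, SemiconjBy, ← hβ.act_mul hφu hz', ← hβ.act_mul hz' hφu,
        (hβ.commute_φ_unit hu (𝔾.isId_d h) hz').eq]
  · exact ⟨0, (β.ideal e).zero_mem, zero_mul 0, by simp⟩
  · obtain ⟨v, hv, hxv, hvc⟩ := ihx
    obtain ⟨w, hw, hyw, hwc⟩ := ihy
    exact ⟨v + w - v * w,
      (β.ideal e).sub_mem ((β.ideal e).add_mem hv hw)
        ((β.ideal e).mul_mem_left ((β.ideal e).subset hv) hw),
      add_mul_add_sub_mul_eq_self hxv hyw (hvc y hy),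
      fun z hz => ((hvc z hz).add_left (hwc z hz)).sub_left ((hvc z hz).mul_left (hwc z hz))⟩
  · obtain ⟨v, hv, hxv, hvc⟩ := ih
    exact ⟨v, hv, by rw [neg_mul, hxv], hvc⟩

include hu in
lemma mul_eq_zero_of_coord_eq_zero {e : G} (he : 𝔾.isId e) {x : T} (hx : x ∈ β.D e)
    (h0 : ∀ k, 𝔾.d k = e → hβ.coord u k x = 0) {y : T} (hy : y ∈ β.D e) : x * y = 0 := by
  refine hβ.closure_induction he (p := fun y => x * y = 0) (fun h hh a ha => ?_) (mul_zero x)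
    (fun y _ z _ hy hz => by rw [mul_add, hy, hz, add_zero])
    (fun y _ hy => by rw [mul_neg, hy, neg_zero]) hy
  · obtain ⟨x', hx', rfl⟩ := hβ.exists_act_eq (hh.symm ▸ hx)
    have hx'u : x' * hβ.φ (𝔾.d h) (u (𝔾.d h)) = 0 := by
      have hc := h0 (𝔾.inv h) ((𝔾.d_inv h).trans hh)
      rw [hβ.coord_act (𝔾.d_inv h) hx', 𝔾.inv_mul] at hc
      rw [← hβ.coord_of_isId hu (𝔾.isId_d h) hx', hc, hβ.φ_zero (𝔾.isId_d h)]
    have hφa := hβ.φ_mem _ (𝔾.isId_d h) a ha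
    rw [← hβ.act_mul hx' hφa, ← ((hu _).2 a ha).1, hβ.φ_mul _ (𝔾.isId_d h) _ (hu _).1 _ ha,
      ← mul_assoc, hx'u, zero_mul, β.act_zero]

include hu in
lemma eq_zero_of_coord_eq_zero {e : G} (he : 𝔾.isId e) {x : T} (hx : x ∈ β.D e)
    (h0 : ∀ k, 𝔾.d k = e → hβ.coord u k x = 0) : x = 0 := by
  obtain ⟨v, hv, hxv, -⟩ := hβ.exists_central_unit hu he hx
  rw [← hxv, hβ.mul_eq_zero_of_coord_eq_zero hu he hx h0 hv]

include hu in
lemma eq_of_coord_eq {e : G} (he : 𝔾.isId e) {x y : T} (hx : x ∈ β.D e) (hy : y ∈ β.D e)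
    (h : ∀ k, 𝔾.d k = e → hβ.coord u k x = hβ.coord u k y) : x = y := by
  refine sub_eq_zero.mp (hβ.eq_zero_of_coord_eq_zero hu he ((β.ideal e).sub_mem hx hy) ?_)
  intro k hk
  rw [hβ.coord_sub hu (hk ▸ hx) (hk ▸ hy), h k hk, sub_self]

variable {T' : Type u} [NonUnitalRing T'] {β' : PartialGroupoidAction 𝔾 T' (Set.univ : Set T')}
  (hβ' : Globalization 𝔾 α β')

include hu in
lemma exists_coord_eq {e : G} (he : 𝔾.isId e) {x' : T'} (hx' : x' ∈ β'.D e) :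
    ∃ x ∈ β.D e, ∀ k, 𝔾.d k = e → hβ.coord u k x = hβ'.coord u k x' := by
  refine hβ'.closure_induction he
    (p := fun x' => ∃ x ∈ β.D e, ∀ k, 𝔾.d k = e → hβ.coord u k x = hβ'.coord u k x')
    (fun h hh a ha => ?_) ?_ (fun x' hx' y' hy' ihx ihy => ?_) (fun x' hx' ih => ?_) hx'
  · refine ⟨_, hh ▸ hβ.act_mem (hβ.φ_mem _ (𝔾.isId_d h) a ha), fun k hk => ?_⟩
    rw [hβ.coord_act_φ hu (hk.trans hh.symm) ha, hβ'.coord_act_φ hu (hk.trans hh.symm) ha]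
  · exact ⟨0, (β.ideal e).zero_mem, fun k _ => by rw [hβ.coord_zero hu, hβ'.coord_zero hu]⟩
  · obtain ⟨x, hx, hxx⟩ := ihx
    obtain ⟨y, hy, hyy⟩ := ihy
    refine ⟨x + y, (β.ideal e).add_mem hx hy, fun k hk => ?_⟩
    rw [hβ.coord_add hu (hk ▸ hx) (hk ▸ hy), hβ'.coord_add hu (hk ▸ hx') (hk ▸ hy'),
      hxx k hk, hyy k hk]
  · obtain ⟨x, hx, hxx⟩ := ih
    refine ⟨-x, (β.ideal e).neg_mem hx, fun k hk => ?_⟩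
    rw [hβ.coord_neg hu (hk ▸ hx), hβ'.coord_neg hu (hk ▸ hx'), hxx k hk]

variable (u) in
noncomputable def compare (e : G) (x' : T') : T :=
  Classical.epsilon fun x => x ∈ β.D e ∧ ∀ k, 𝔾.d k = e → hβ.coord u k x = hβ'.coord u k x'

include hu in
lemma compare_spec {e : G} (he : 𝔾.isId e) {x' : T'} (hx' : x' ∈ β'.D e) :
    hβ.compare u hβ' e x' ∈ β.D e ∧
      ∀ k, 𝔾.d k = e → hβ.coord u k (hβ.compare u hβ' e x') = hβ'.coord u k x' := by
  obtain ⟨x, hx⟩ := hβ.exists_coord_eq hu hβ' he hx'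
  exact Classical.epsilon_spec
    (p := fun y => y ∈ β.D e ∧ ∀ k, 𝔾.d k = e → hβ.coord u k y = hβ'.coord u k x') ⟨x, hx⟩

include hu in
lemma compare_eq {e : G} (he : 𝔾.isId e) {x' : T'} (hx' : x' ∈ β'.D e) {x : T}
    (hx : x ∈ β.D e) (h : ∀ k, 𝔾.d k = e → hβ.coord u k x = hβ'.coord u k x') :
    hβ.compare u hβ' e x' = x := by
  obtain ⟨hmem, hc⟩ := hβ.compare_spec hu hβ' he hx'
  exact hβ.eq_of_coord_eq hu he hmem hx fun k hk => (hc k hk).trans (h k hk).symm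

include hu in
lemma compare_mem {e : G} (he : 𝔾.isId e) {x' : T'} (hx' : x' ∈ β'.D e) :
    hβ.compare u hβ' e x' ∈ β.D e :=
  (hβ.compare_spec hu hβ' he hx').1

include hu in
lemma coord_compare {e : G} (he : 𝔾.isId e) {x' : T'} (hx' : x' ∈ β'.D e) {k : G}
    (hk : 𝔾.d k = e) : hβ.coord u k (hβ.compare u hβ' e x') = hβ'.coord u k x' :=
  (hβ.compare_spec hu hβ' he hx').2 k hk

include hu in
lemma compare_injOn {e : G} (he : 𝔾.isId e) : Set.InjOn (hβ.compare u hβ' e) (β'.D e) :=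
  fun x' hx' y' hy' h => hβ'.eq_of_coord_eq hu he hx' hy' fun k hk => by
    rw [← hβ.coord_compare hu hβ' he hx' hk, ← hβ.coord_compare hu hβ' he hy' hk, h]

include hu in
lemma compare_surjOn {e : G} (he : 𝔾.isId e) :
    Set.SurjOn (hβ.compare u hβ' e) (β'.D e) (β.D e) := fun x hx => by
  obtain ⟨x', hx', h⟩ := hβ'.exists_coord_eq hu hβ he hx
  exact ⟨x', hx', hβ.compare_eq hu hβ' he hx' hx fun k hk => (h k hk).symm⟩

include hu in
lemma compare_add {e : G} (he : 𝔾.isId e) {x' y' : T'} (hx' : x' ∈ β'.D e)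
    (hy' : y' ∈ β'.D e) :
    hβ.compare u hβ' e (x' + y') = hβ.compare u hβ' e x' + hβ.compare u hβ' e y' := by
  have hx := hβ.compare_mem hu hβ' he hx'
  have hy := hβ.compare_mem hu hβ' he hy'
  refine hβ.compare_eq hu hβ' he ((β'.ideal e).add_mem hx' hy') ((β.ideal e).add_mem hx hy)
    fun k hk => ?_
  rw [hβ.coord_add hu (hk ▸ hx) (hk ▸ hy), hβ'.coord_add hu (hk ▸ hx') (hk ▸ hy'),
    hβ.coord_compare hu hβ' he hx' hk, hβ.coord_compare hu hβ' he hy' hk]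

include hu in
lemma compare_mul {e : G} (he : 𝔾.isId e) {x' y' : T'} (hx' : x' ∈ β'.D e)
    (hy' : y' ∈ β'.D e) :
    hβ.compare u hβ' e (x' * y') = hβ.compare u hβ' e x' * hβ.compare u hβ' e y' := by
  have hx := hβ.compare_mem hu hβ' he hx'
  have hy := hβ.compare_mem hu hβ' he hy'
  refine hβ.compare_eq hu hβ' he ((β'.ideal e).mul_mem_left ((β'.ideal e).subset hx') hy')
    ((β.ideal e).mul_mem_left ((β.ideal e).subset hx) hy) fun k hk => ?_
  rw [hβ.coord_mul hu (hk ▸ hx) (hk ▸ hy), hβ'.coord_mul hu (hk ▸ hx') (hk ▸ hy'),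
    hβ.coord_compare hu hβ' he hx' hk, hβ.coord_compare hu hβ' he hy' hk]

include hu in
lemma act_compare {g : G} {x' : T'} (hx' : x' ∈ β'.D (𝔾.d g)) :
    β.act g (hβ.compare u hβ' (𝔾.d g) x') = hβ.compare u hβ' (𝔾.r g) (β'.act g x') := by
  have hx := hβ.compare_mem hu hβ' (𝔾.isId_d g) hx'
  refine (hβ.compare_eq hu hβ' (𝔾.isId_r g) (hβ'.act_mem hx') (hβ.act_mem hx)
    fun k hk => ?_).symm
  rw [hβ.coord_act hk hx, hβ'.coord_act hk hx',
    hβ.coord_compare hu hβ' (𝔾.isId_d g) hx' (𝔾.d_mul k g hk)]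

end Globalization

theorem globalization_unique_general {G : Type u} (𝔾 : AlgGroupoid G)
    {R : Type u} [NonUnitalRing R] (α : PartialGroupoidAction 𝔾 R (Set.univ : Set R))
    (hD : ∀ g : G, ∃ u, IsIdentityElem u (α.D g))
    {T : Type u} [NonUnitalRing T] (β : PartialGroupoidAction 𝔾 T (Set.univ : Set T))
    {T' : Type u} [NonUnitalRing T'] (β' : PartialGroupoidAction 𝔾 T' (Set.univ : Set T'))
    (hβ : Globalization 𝔾 α β) (hβ' : Globalization 𝔾 α β') :
    ∃ ψ : G → T' → T,
      (∀ e, 𝔾.isId e →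
        Set.BijOn (ψ e) (β'.D e) (β.D e) ∧
        (∀ x ∈ β'.D e, ∀ y ∈ β'.D e,
          ψ e (x + y) = ψ e x + ψ e y ∧ ψ e (x * y) = ψ e x * ψ e y)) ∧
      (∀ g : G, ∀ a ∈ β'.D (𝔾.d g),
        β.act g (ψ (𝔾.d g) a) = ψ (𝔾.r g) (β'.act g a)) := by
  choose u hu using hD
  refine ⟨hβ.compare u hβ', fun e he => ⟨⟨?_, ?_, ?_⟩, ?_⟩, ?_⟩
  · exact fun x' hx' => hβ.compare_mem hu hβ' he hx'
  · exact hβ.compare_injOn hu hβ' he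
  · exact hβ.compare_surjOn hu hβ' he
  · exact fun x' hx' y' hy' =>
      ⟨hβ.compare_add hu hβ' he hx' hy', hβ.compare_mul hu hβ' he hx' hy'⟩
  · exact fun g a ha => hβ.act_compare hu hβ' ha

/-- **Theorem 2.1 (uniqueness)**: if every ideal `D_g` of a partial action `α`
is unital, then a globalization of `α` is unique up to equivalence: for any
two globalizations `(T, β, φ)` and `(T', β', φ')` there is, for each identity
`e ∈ G₀`, a ring isomorphism `ψ_e : E'_e → E_e` with
`β_g(ψ_{d(g)}(a)) = ψ_{r(g)}(β'_g(a))` for all `g ∈ G`, `a ∈ E'_{d(g)}`. -/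
theorem globalization_unique {G : Type u} [Nonempty G] (𝔾 : AlgGroupoid G)
    {R : Type u} [NonUnitalRing R] (α : PartialGroupoidAction 𝔾 R (Set.univ : Set R))
    (hD : ∀ g : G, ∃ u, IsIdentityElem u (α.D g))
    {T : Type u} [NonUnitalRing T] (β : PartialGroupoidAction 𝔾 T (Set.univ : Set T))
    {T' : Type u} [NonUnitalRing T'] (β' : PartialGroupoidAction 𝔾 T' (Set.univ : Set T'))
    (hβ : Globalization 𝔾 α β) (hβ' : Globalization 𝔾 α β') :
    ∃ ψ : G → T' → T,
      (∀ e, 𝔾.isId e →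
        Set.BijOn (ψ e) (β'.D e) (β.D e) ∧
        (∀ x ∈ β'.D e, ∀ y ∈ β'.D e,
          ψ e (x + y) = ψ e x + ψ e y ∧ ψ e (x * y) = ψ e x * ψ e y)) ∧
      (∀ g : G, ∀ a ∈ β'.D (𝔾.d g),
        β.act g (ψ (𝔾.d g) a) = ψ (𝔾.r g) (β'.act g a)) :=
  globalization_unique_general 𝔾 α hD β β' hβ hβ'
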